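/- Let s ∈ S and let s_0 = u_0 → u_1 → ⋯ → u_k = s be any finite path of feasible BDM transitions from the initial state s_0 to s that contains no action of type N_<. Then the number of inhibition actions I along this path equals the class of s: #{1 ≤ i ≤ k : α_i = I} = K(s). -/

import Mathlib

open scoped Classical ENNReal
open Filter

namespace BDM

/-- Augmented BDM state set `S̄`: batteries `b 1, …, b M` (entries outside `{1,…,M}`
are fixed to `0`), drain `d`, time residue `T`, ministep `t ∈ {1,…,M+1}`, and the
invariant `d + T + ∑ b_m = 0`. -/
structure St (M : ℕ) where
  b : ℕ → ℤ
  d : ℤ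
  T : ℤ
  t : ℕ
  ht1 : 1 ≤ t
  ht2 : t ≤ M + 1
  hb0 : ∀ m, m = 0 ∨ M < m → b m = 0
  inv : d + T + ∑ m ∈ Finset.range M, b (m + 1) = 0

/-- Membership in the (restricted) state set `S`: `0 ≤ T ≤ M`. -/
def inS {M : ℕ} (s : St M) : Prop := 0 ≤ s.T ∧ s.T ≤ (M : ℤ)

/-- The initial state `s₀ = (0,…,0,0;0,M+1)`. -/
def init (M : ℕ) : St M where
  b := fun _ => 0
  d := 0
  T := 0
  t := M + 1
  ht1 := Nat.le_add_left 1 M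
  ht2 := le_refl _
  hb0 := fun _ _ => rfl
  inv := by simp

/-- The six actions of the BDM. -/
inductive Act : Type
  | D | I | Ne | Nl | dm | bp
deriving DecidableEq

/-- Feasible transitions of the BDM. -/
def Step {M : ℕ} (s : St M) : Act → St M → Prop
  | .D, s' => s.t ≤ M ∧ s.d < s.b s.t ∧ s'.t = s.t + 1 ∧ s'.T = s.T ∧
      s'.d = s.b s.t ∧ s'.b = Function.update s.b s.t s.d
  | .I, s' => s.t ≤ M ∧ s.d < s.b s.t ∧ s'.t = s.t + 1 ∧ s'.T = s.T ∧
      s'.d = s.d ∧ s'.b = s.b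
  | .Ne, s' => s.t ≤ M ∧ s.b s.t = s.d ∧ s'.t = s.t + 1 ∧ s'.T = s.T ∧
      s'.d = s.d ∧ s'.b = s.b
  | .Nl, s' => s.t ≤ M ∧ s.b s.t < s.d ∧ s'.t = s.t + 1 ∧ s'.T = s.T ∧
      s'.d = s.d ∧ s'.b = s.b
  | .dm, s' => s.t = M + 1 ∧ s.T < M ∧ s'.t = 1 ∧ s'.T = s.T + 1 ∧
      s'.d = s.d - 1 ∧ s'.b = s.b
  | .bp, s' => s.t = M + 1 ∧ s.T = M ∧ s'.t = 1 ∧ s'.T = 0 ∧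
      s'.d = s.d ∧ s'.b = fun m => if 1 ≤ m ∧ m ≤ M then s.b m + 1 else 0

/-- The `(M+1)`-tuple `(b_1,…,b_{t−1},d,b_t,…,b_M)` as a list. -/
def tuple {M : ℕ} (s : St M) : List ℤ :=
  ((List.range M).map (fun m => s.b (m + 1))).insertIdx (s.t - 1) s.d

/-- One transposition of adjacent entries of a list. -/
def AdjSwap (l l' : List ℤ) : Prop :=
  ∃ l₁ x y l₂, l = l₁ ++ x :: y :: l₂ ∧ l' = l₁ ++ y :: x :: l₂

/-- The set of numbers `n` such that `l` can be sorted into nonincreasing order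
by `n` transpositions of adjacent entries. -/
def SortCost (l : List ℤ) : Set ℕ :=
  {n | ∃ f : ℕ → List ℤ, f 0 = l ∧ (∀ i < n, AdjSwap (f i) (f (i + 1))) ∧
        (f n).Pairwise (· ≥ ·)}

/-- `π_l`: the minimal number of adjacent transpositions needed to sort `l`
into nonincreasing order. -/
noncomputable def piMin (l : List ℤ) : ℕ := sInf (SortCost l)

/-- The nonincreasing rearrangement of a list. -/
def sortedTuple (l : List ℤ) : List ℤ := l.insertionSort (· ≥ ·)

/-- The class `K(s) = −π_s + M·T + 2·∑_{m=1}^{M+1} b̃_m·(M+1−m)`. -/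
noncomputable def Kc {M : ℕ} (s : St M) : ℤ :=
  -(piMin (tuple s) : ℤ) + (M : ℤ) * s.T +
    2 * ∑ i ∈ Finset.range (M + 1), (sortedTuple (tuple s)).getD i 0 * ((M : ℤ) - i)

/-- The transition matrix `𝒯(s,s')` of the BDM, with values in `ℝ≥0∞`. -/
noncomputable def Tmat (M q : ℕ) (s s' : St M) : ℝ≥0∞ :=
  if Step s .D s' then ((q : ℝ≥0∞) - 1) / q
  else if Step s .I s' then 1 / q
  else if (Step s .Ne s' ∨ Step s .Nl s' ∨ Step s .dm s' ∨ Step s .bp s') then 1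
  else 0

/-- The state set `S` as a subtype. -/
def SS (M : ℕ) : Type := {s : St M // inS s}

/-- The mass distributions `μ_τ` on `S`: `μ_0` is the point mass at `s₀` and
`μ_{τ+1}(s') = ∑_{s∈S} 𝒯(s,s')·μ_τ(s)`. -/
noncomputable def mu (M q : ℕ) : ℕ → SS M → ℝ≥0∞
  | 0, s => if s.1 = init M then 1 else 0
  | τ + 1, s' => ∑' s : SS M, Tmat M q s.1 s'.1 * mu M q τ s

/-- The asymptotic measure `μ_∞(s) = limsup_{τ→∞} μ_τ(s)`. -/
noncomputable def muInf (M q : ℕ) (s : SS M) : ℝ≥0∞ :=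
  Filter.atTop.limsup (fun τ => mu M q τ s)

end BDM

namespace BDM

/-- `Chain s L s'`: the list of actions `L` gives a finite path of feasible
transitions from `s` to `s'`. -/
inductive Chain {M : ℕ} : St M → List Act → St M → Prop
  | nil (s : St M) : Chain s [] s
  | cons {s u s' : St M} {α : Act} {L : List Act} :
      Step s α u → Chain u L s' → Chain s (α :: L) s'

end BDM

namespace BDM


/-- Inversion count for nonincreasing sorting: #{i<j : l_i < l_j}. -/
def invc : List ℤ → ℕ
  | [] => 0
  | a :: l => l.countP (fun x => a < x) + invc l

/-- Sum of `max` over pairs i<j. -/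
def psum : List ℤ → ℤ
  | [] => 0
  | a :: l => (l.map (fun x => max a x)).sum + psum l

lemma psum_perm : ∀ {l l' : List ℤ}, l.Perm l' → psum l = psum l' := by
  intro l l' h
  induction h with
  | nil => rfl
  | cons a h ih => simp [psum, ih, (h.map (fun x => max a x)).sum_eq]
  | swap a b l => simp [psum, max_comm]; ring
  | trans _ _ ih1 ih2 => exact ih1.trans ih2

lemma invc_append_singleton (d : ℤ) : ∀ l : List ℤ,
    invc (l ++ [d]) = invc l + l.countP (fun x => x < d) := by
  intro l
  induction l with
  | nil => simp [invc]
  | cons a l ih =>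
      simp only [List.cons_append, invc, List.append_eq, List.countP_append, ih]
      simp only [List.countP_cons, List.countP_nil]
      omega

lemma invc_append (l₁ l₂ : List ℤ) :
    invc (l₁ ++ l₂) = invc l₁ + invc l₂ +
      (l₁.map (fun a => l₂.countP (fun x => a < x))).sum := by
  induction l₁ with
  | nil => simp [invc]
  | cons a l ih => simp [invc, ih, List.countP_append]; omega

lemma invc_swap (l₁ l₂ : List ℤ) (x y : ℤ) :
    invc (l₁ ++ y :: x :: l₂) + (if x < y then 1 else 0) =
    invc (l₁ ++ x :: y :: l₂) + (if y < x then 1 else 0) := by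
  rw [invc_append, invc_append]
  have h1 : ∀ a : ℤ, (y :: x :: l₂).countP (fun z => a < z)
      = (x :: y :: l₂).countP (fun z => a < z) := by
    intro a; simp [List.countP_cons]; omega
  simp only [List.map_congr_left (fun a _ => h1 a)]
  have h2 : invc (y :: x :: l₂) + (if x < y then 1 else 0)
      = invc (x :: y :: l₂) + (if y < x then 1 else 0) := by
    simp [invc, List.countP_cons]
    omega
  omega

lemma invc_eq_zero_of_sorted : ∀ {l : List ℤ}, l.Pairwise (· ≥ ·) → invc l = 0 := by
  intro l h
  induction l with
  | nil => rfl
  | cons a l ih =>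
      rw [List.pairwise_cons] at h
      simp only [invc, ih h.2, Nat.add_eq_zero]
      refine ⟨List.countP_eq_zero.2 ?_, trivial⟩
      intro x hx
      simpa using not_lt.2 (h.1 x hx)

lemma sorted_of_invc_eq_zero : ∀ {l : List ℤ}, invc l = 0 → l.Pairwise (· ≥ ·) := by
  intro l h
  induction l with
  | nil => simp
  | cons a l ih =>
      simp only [invc, Nat.add_eq_zero] at h
      rw [List.pairwise_cons]
      refine ⟨fun b hb => ?_, ih h.2⟩
      have := List.countP_eq_zero.1 h.1 b hb
      simpa using this

lemma exists_adj_of_not_sorted : ∀ {l : List ℤ}, ¬ l.Pairwise (· ≥ ·) →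
    ∃ l₁ x y l₂, l = l₁ ++ x :: y :: l₂ ∧ x < y := by
  intro l
  induction l with
  | nil => intro h; exact absurd (by simp) h
  | cons a l ih =>
      intro h
      match l, ih with
      | [], _ => exact absurd (by simp) h
      | b :: l, ih =>
        by_cases hab : a < b
        · exact ⟨[], a, b, l, by simp, hab⟩
        · have hns : ¬ (b :: l).Pairwise (· ≥ ·) := by
            intro hs
            apply h
            rw [List.pairwise_cons] at hs ⊢
            refine ⟨fun c hc => ?_, by rw [List.pairwise_cons]; exact hs⟩
            rcases List.mem_cons.1 hc with rfl | hc
            · omega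
            · have := hs.1 c hc; omega
          obtain ⟨l₁, x, y, l₂, heq, hxy⟩ := ih hns
          exact ⟨a :: l₁, x, y, l₂, by simp [heq], hxy⟩


section SortCostLemmas

lemma adjSwap_invc_le {l l' : List ℤ} (h : AdjSwap l l') : invc l ≤ invc l' + 1 := by
  obtain ⟨l₁, x, y, l₂, rfl, rfl⟩ := h
  have := invc_swap l₁ l₂ x y
  split_ifs at this <;> omega

lemma mem_sortCost_succ {l l' : List ℤ} {n : ℕ} (h : AdjSwap l l')
    (hn : n ∈ SortCost l') : n + 1 ∈ SortCost l := by
  obtain ⟨f, h0, hsw, hs⟩ := hn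
  refine ⟨fun i => match i with | 0 => l | i + 1 => f i, rfl, ?_, hs⟩
  intro i hi
  match i with
  | 0 => simpa [h0] using h
  | i + 1 => exact hsw i (by omega)

lemma invc_mem_sortCost (l : List ℤ) : invc l ∈ SortCost l := by
  suffices H : ∀ n l, invc l = n → n ∈ SortCost l from H _ l rfl
  intro n
  induction n using Nat.strong_induction_on with
  | _ n ih =>
    intro l h
    by_cases hs : l.Pairwise (· ≥ ·)
    · have h0 : invc l = 0 := invc_eq_zero_of_sorted hs
      refine h ▸ h0 ▸ ⟨fun _ => l, rfl, fun i hi => absurd hi (by omega), hs⟩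
    · obtain ⟨l₁, x, y, l₂, rfl, hxy⟩ := exists_adj_of_not_sorted hs
      have hkey := invc_swap l₁ l₂ x y
      rw [if_pos hxy, if_neg (by omega)] at hkey
      have hlt : invc (l₁ ++ y :: x :: l₂) < n := by omega
      have hmem := ih _ hlt (l₁ ++ y :: x :: l₂) rfl
      have := mem_sortCost_succ ⟨l₁, x, y, l₂, rfl, rfl⟩ hmem
      have hn : invc (l₁ ++ y :: x :: l₂) + 1 = n := by omega
      exact hn ▸ this

lemma sortCost_ge : ∀ (n : ℕ) (l : List ℤ), n ∈ SortCost l → invc l ≤ n := by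
  intro n
  induction n with
  | zero =>
      rintro l ⟨f, h0, _, hs⟩
      rw [h0] at hs
      simp [invc_eq_zero_of_sorted hs]
  | succ n ih =>
      rintro l ⟨f, h0, hsw, hs⟩
      have h01 : AdjSwap l (f 1) := h0 ▸ hsw 0 (by omega)
      have hmem : n ∈ SortCost (f 1) :=
        ⟨fun i => f (i + 1), rfl, fun i hi => hsw (i + 1) (by omega), hs⟩
      have h1 := ih _ hmem
      have h2 := adjSwap_invc_le h01
      omega

lemma piMin_eq_invc (l : List ℤ) : piMin l = invc l := by
  have hmem := invc_mem_sortCost l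
  have h1 : piMin l ≤ invc l := Nat.sInf_le hmem
  have h2 : invc l ≤ piMin l := sortCost_ge _ _ (Nat.sInf_mem ⟨_, hmem⟩)
  omega

end SortCostLemmas

section WsumLemmas

lemma sorted_wsum : ∀ l : List ℤ, l.Pairwise (· ≥ ·) →
    ∑ i ∈ Finset.range l.length, l.getD i 0 * ((l.length : ℤ) - 1 - i) = psum l := by
  intro l
  induction l with
  | nil => simp [psum]
  | cons a l ih =>
      intro hs
      rw [List.pairwise_cons] at hs
      rw [List.length_cons, Finset.sum_range_succ']
      simp only [List.getD_cons_succ, List.getD_cons_zero]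
      have h1 : ∀ i ∈ Finset.range l.length,
          l.getD i 0 * (((l.length + 1 : ℕ) : ℤ) - 1 - ((i + 1 : ℕ) : ℤ))
          = l.getD i 0 * ((l.length : ℤ) - 1 - i) := by
        intro i _
        push_cast
        ring_nf
      rw [Finset.sum_congr rfl h1, ih hs.2]
      have h2 : (l.map (fun x => max a x)) = l.map (fun _ => a) :=
        List.map_congr_left (fun x hx => max_eq_left (hs.1 x hx))
      have h3 : ((l.map (fun x => max a x)).sum : ℤ) = a * l.length := by
        rw [h2]
        simp [List.map_const', mul_comm]
      simp only [psum, h3, List.getD_cons_zero]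
      push_cast
      ring

lemma Kc_eq (M : ℕ) (s : St M) :
    Kc s = -(invc (tuple s) : ℤ) + (M : ℤ) * s.T + 2 * psum (tuple s) := by
  have hlen : (tuple s).length = M + 1 := by
    rw [tuple, List.length_insertIdx]
    have := s.ht2
    simp
    omega
  have hperm : (sortedTuple (tuple s)).Perm (tuple s) :=
    List.perm_insertionSort _ _
  have hslen : (sortedTuple (tuple s)).length = M + 1 := by
    rw [hperm.length_eq, hlen]
  have hsorted : (sortedTuple (tuple s)).Pairwise (· ≥ ·) :=
    List.pairwise_insertionSort _ _
  have hw := sorted_wsum _ hsorted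
  rw [hslen] at hw
  unfold Kc
  rw [piMin_eq_invc]
  have h4 : ∀ i ∈ Finset.range (M + 1),
      (sortedTuple (tuple s)).getD i 0 * ((M : ℤ) - i)
      = (sortedTuple (tuple s)).getD i 0 * ((M + 1 : ℕ) - 1 - (i : ℤ)) := by
    intro i _
    push_cast
    ring_nf
  rw [Finset.sum_congr rfl h4, hw, psum_perm hperm]

end WsumLemmas

section TupleLemmas

lemma insertIdx_take_drop (a : ℤ) : ∀ (n : ℕ) (l : List ℤ), n ≤ l.length →
    l.insertIdx n a = l.take n ++ a :: l.drop n := by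
  intro n
  induction n with
  | zero => intro l _; simp [List.insertIdx_zero]
  | succ n ih =>
      intro l hl
      match l with
      | [] => simp at hl
      | x :: l =>
          rw [List.insertIdx_succ_cons, ih l (by simpa using hl)]
          simp

lemma insertIdx_lt (a : ℤ) (n : ℕ) (l : List ℤ) (h : n < l.length) :
    l.insertIdx n a = l.take n ++ a :: l[n] :: l.drop (n + 1) := by
  rw [insertIdx_take_drop a n l (le_of_lt h), List.drop_eq_getElem_cons h]

lemma insertIdx_succ_lt (a : ℤ) (n : ℕ) (l : List ℤ) (h : n < l.length) :
    l.insertIdx (n + 1) a = l.take n ++ l[n] :: a :: l.drop (n + 1) := by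
  rw [insertIdx_take_drop a (n + 1) l (by omega)]
  have h2 : l.take (n + 1) = l.take n ++ [l[n]] := by
    rw [List.take_succ, List.getElem?_eq_getElem h]
    rfl
  rw [h2, List.append_assoc]
  rfl

lemma take_set_self : ∀ (l : List ℤ) (k : ℕ) (a : ℤ), (l.set k a).take k = l.take k := by
  intro l
  induction l with
  | nil => intro k a; simp
  | cons x l ih =>
      intro k a
      match k with
      | 0 => simp
      | k + 1 => simp [List.set_cons_succ, ih l.length]; exact ih k a

lemma drop_succ_set_self : ∀ (l : List ℤ) (k : ℕ) (a : ℤ),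
    (l.set k a).drop (k + 1) = l.drop (k + 1) := by
  intro l
  induction l with
  | nil => intro k a; simp
  | cons x l ih =>
      intro k a
      match k with
      | 0 => simp
      | k + 1 => simp [List.set_cons_succ]; exact ih k a

variable {M : ℕ}

/-- The battery part of the tuple. -/
def lb (s : St M) : List ℤ := (List.range M).map (fun m => s.b (m + 1))

lemma lb_length (s : St M) : (lb s).length = M := by simp [lb]

lemma lb_getElem (s : St M) (i : ℕ) (h : i < M) :
    (lb s)[i]'(by rw [lb_length]; exact h) = s.b (i + 1) := by
  simp [lb]

lemma tuple_eq_insert (s : St M) : tuple s = (lb s).insertIdx (s.t - 1) s.d := rfl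

lemma tuple_decomp (s : St M) (h : s.t ≤ M) :
    tuple s = (lb s).take (s.t - 1) ++ s.d :: s.b s.t :: (lb s).drop s.t := by
  have ht1 := s.ht1
  have hk : s.t - 1 < (lb s).length := by rw [lb_length]; omega
  rw [tuple_eq_insert, insertIdx_lt _ _ _ hk, lb_getElem s (s.t - 1) (by omega)]
  have h1 : s.t - 1 + 1 = s.t := by omega
  rw [h1]

lemma tuple_last (s : St M) (h : s.t = M + 1) :
    tuple s = lb s ++ [s.d] := by
  rw [tuple_eq_insert, h]
  have : M + 1 - 1 = (lb s).length := by rw [lb_length]; omega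
  rw [this, List.insertIdx_length_self]


end TupleLemmas

section StepLemmas

lemma countP_lt_add_ge (d : ℤ) : ∀ l : List ℤ,
    l.countP (fun x => x < d) + l.countP (fun x => d ≤ x) = l.length := by
  intro l
  induction l with
  | nil => simp
  | cons a l ih =>
      simp only [List.countP_cons, List.length_cons]
      by_cases h : a < d
      · rw [if_pos (by simpa using h), if_neg (by simpa using not_le.2 h)]; omega
      · rw [if_neg (by simpa using h), if_pos (by simpa using not_lt.1 h)]; omega

lemma maxsum_pred (d : ℤ) : ∀ l : List ℤ,
    (l.map (fun x => max d x)).sum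
      = (l.map (fun x => max (d - 1) x)).sum + l.countP (fun x => x < d) := by
  intro l
  induction l with
  | nil => simp
  | cons a l ih =>
      simp only [List.map_cons, List.sum_cons, List.countP_cons, ih]
      by_cases h : a < d
      · rw [if_pos (by simpa using h), max_eq_left (by omega), max_eq_left (by omega)]
        push_cast
        ring
      · rw [if_neg (by simpa using h), max_eq_right (by omega), max_eq_right (by omega)]
        push_cast
        ring

lemma invc_map_succ : ∀ l : List ℤ, invc (l.map (fun x => x + 1)) = invc l := by
  intro l
  induction l with
  | nil => rfl
  | cons a l ih =>
      have h1 : (l.map (fun x => x + 1)).countP (fun x => a + 1 < x)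
          = l.countP (fun x => a < x) := by
        rw [List.countP_map]
        apply List.countP_congr
        intro x _
        simp only [Function.comp_apply, decide_eq_true_eq]
        omega
      simp only [List.map_cons, invc, ih, h1]

lemma sum_map_add_one (f : ℤ → ℤ) : ∀ l : List ℤ,
    (l.map (fun x => f x + 1)).sum = (l.map f).sum + l.length := by
  intro l
  induction l with
  | nil => simp
  | cons a l ih =>
      simp only [List.map_cons, List.sum_cons, ih, List.length_cons]
      push_cast
      ring

lemma maxsum_succ (d : ℤ) : ∀ l : List ℤ,
    ((l.map (fun x => x + 1)).map (fun x => max d x)).sum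
      = (l.map (fun x => max d x)).sum + l.countP (fun x => d ≤ x) := by
  intro l
  induction l with
  | nil => simp
  | cons a l ih =>
      simp only [List.map_cons, List.sum_cons, List.countP_cons, ih]
      by_cases h : d ≤ a
      · rw [if_pos (by simpa using h), max_eq_right (by omega), max_eq_right (by omega)]
        push_cast
        ring
      · rw [if_neg (by simpa using h), max_eq_left (by omega), max_eq_left (by omega)]
        push_cast
        ring

lemma psum_map_succ : ∀ l : List ℤ,
    2 * psum (l.map (fun x => x + 1)) = 2 * psum l + l.length * (l.length - 1) := by
  intro l
  induction l with
  | nil => simp [psum]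
  | cons a l ih =>
      simp only [List.map_cons, psum, List.length_cons]
      have h1 : ((l.map (fun x => x + 1)).map (fun x => max (a + 1) x)).sum
          = (l.map (fun x => max a x)).sum + l.length := by
        rw [List.map_map]
        have h2 : (l.map ((fun x => max (a + 1) x) ∘ fun x => x + 1))
            = l.map (fun x => max a x + 1) := by
          apply List.map_congr_left
          intro x _
          simp only [Function.comp_apply]
          rcases le_total a x with h | h
          · rw [max_eq_right h, max_eq_right (by omega)]
          · rw [max_eq_left h, max_eq_left (by omega)]
        rw [h2, sum_map_add_one]
      rw [h1]
      push_cast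
      push_cast at ih
      ring_nf
      ring_nf at ih
      linarith

variable {M : ℕ}

lemma step_D_tuple {s s' : St M} (h : Step s Act.D s') :
    tuple s' = tuple s ∧ s'.T = s.T := by
  obtain ⟨htM, hlt, ht', hT, hd', hb'⟩ := h
  refine ⟨?_, hT⟩
  have ht1 := s.ht1
  have hkM : s.t - 1 < M := by omega
  have hlb : lb s' = (lb s).set (s.t - 1) s.d := by
    apply List.ext_getElem
    · simp [lb, List.length_set]
    · intro i h1 h2
      have hiM : i < M := by simpa [lb, List.length_set] using h1
      rw [List.getElem_set]
      simp only [lb, List.getElem_map, List.getElem_range, hb', Function.update_apply]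
      by_cases hi : i + 1 = s.t
      · rw [if_pos hi, if_pos (by omega)]
      · rw [if_neg hi, if_neg (by omega)]
  have hts' : s'.t - 1 = (s.t - 1) + 1 := by omega
  rw [tuple_eq_insert s', hts', hlb, hd']
  rw [insertIdx_succ_lt _ _ _ (by rw [List.length_set, lb_length]; omega)]
  rw [take_set_self, drop_succ_set_self]
  have hget : ((lb s).set (s.t - 1) s.d)[s.t - 1]'(by rw [List.length_set, lb_length]; omega)
      = s.d := by
    rw [List.getElem_set, if_pos rfl]
  rw [hget, tuple_decomp s htM]
  rw [show s.t - 1 + 1 = s.t from by omega]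

lemma step_Ne_tuple {s s' : St M} (h : Step s Act.Ne s') :
    tuple s' = tuple s ∧ s'.T = s.T := by
  obtain ⟨htM, heq, ht', hT, hd', hb'⟩ := h
  refine ⟨?_, hT⟩
  have ht1 := s.ht1
  have hkM : s.t - 1 < M := by omega
  have hlb : lb s' = lb s := by simp [lb, hb']
  have hts' : s'.t - 1 = (s.t - 1) + 1 := by omega
  have hv : tuple s' = (lb s).take (s.t - 1) ++ s.b s.t :: s.d :: (lb s).drop s.t := by
    rw [tuple_eq_insert s', hts', hlb, hd']
    rw [insertIdx_succ_lt _ _ _ (by rw [lb_length]; omega)]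
    rw [lb_getElem s (s.t - 1) hkM, show s.t - 1 + 1 = s.t from by omega]
  have hu : tuple s = (lb s).take (s.t - 1) ++ s.d :: s.b s.t :: (lb s).drop s.t :=
    tuple_decomp s htM
  rw [hu, hv, heq]

lemma step_I_Kc {s s' : St M} (h : Step s Act.I s') : Kc s' = Kc s + 1 := by
  obtain ⟨htM, hlt, ht', hT, hd', hb'⟩ := h
  have ht1 := s.ht1
  have hkM : s.t - 1 < M := by omega
  have hlb : lb s' = lb s := by simp [lb, hb']
  have hts' : s'.t - 1 = (s.t - 1) + 1 := by omega
  have hv : tuple s' = (lb s).take (s.t - 1) ++ s.b s.t :: s.d :: (lb s).drop s.t := by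
    rw [tuple_eq_insert s', hts', hlb, hd']
    rw [insertIdx_succ_lt _ _ _ (by rw [lb_length]; omega)]
    rw [lb_getElem s (s.t - 1) hkM, show s.t - 1 + 1 = s.t from by omega]
  have hu : tuple s = (lb s).take (s.t - 1) ++ s.d :: s.b s.t :: (lb s).drop s.t :=
    tuple_decomp s htM
  have hperm : (tuple s').Perm (tuple s) := by
    rw [hu, hv]
    exact List.Perm.append_left _ (List.Perm.swap _ _ _)
  have hinv := invc_swap ((lb s).take (s.t - 1)) ((lb s).drop s.t) s.d (s.b s.t)
  rw [if_pos hlt, if_neg (by omega)] at hinv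
  rw [Kc_eq, Kc_eq, hT, psum_perm hperm, hu, hv]
  push_cast at hinv ⊢
  linarith

lemma step_dm_Kc {s s' : St M} (h : Step s Act.dm s') : Kc s' = Kc s := by
  obtain ⟨htM, hlt, ht', hT, hd', hb'⟩ := h
  have hlb : lb s' = lb s := by simp [lb, hb']
  have hu : tuple s = lb s ++ [s.d] := tuple_last s htM
  have hv : tuple s' = (s.d - 1) :: lb s := by
    rw [tuple_eq_insert s', ht', hlb, hd']
    rfl
  set l := lb s with hl
  have hc1 : invc (tuple s) = invc l + l.countP (fun x => x < s.d) := by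
    rw [hu, invc_append_singleton]
  have hc2 : invc (tuple s') = l.countP (fun x => s.d ≤ x) + invc l := by
    rw [hv]
    show l.countP (fun x => s.d - 1 < x) + invc l = _
    congr 1
    apply List.countP_congr
    intro x _
    simp only [decide_eq_true_eq]
    omega
  have hp1 : psum (tuple s) = (l.map (fun x => max s.d x)).sum + psum l := by
    rw [hu, psum_perm (List.perm_append_singleton _ _)]
    rfl
  have hp2 : psum (tuple s') = (l.map (fun x => max (s.d - 1) x)).sum + psum l := by
    rw [hv]; rfl
  have hms := maxsum_pred s.d l
  have hcc := countP_lt_add_ge s.d l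
  rw [lb_length] at hcc
  rw [Kc_eq, Kc_eq, hc1, hc2, hp1, hp2, hT]
  push_cast
  push_cast at hms
  ring_nf
  ring_nf at hms
  push_cast at hcc
  linarith

lemma step_bp_Kc {s s' : St M} (h : Step s Act.bp s') : Kc s' = Kc s := by
  obtain ⟨htM, hTM, ht', hT, hd', hb'⟩ := h
  have hlb : lb s' = (lb s).map (fun x => x + 1) := by
    rw [lb, lb, List.map_map]
    apply List.map_congr_left
    intro m hm
    rw [List.mem_range] at hm
    simp only [hb', Function.comp_apply]
    rw [if_pos ⟨by omega, by omega⟩]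
  have hu : tuple s = lb s ++ [s.d] := tuple_last s htM
  have hv : tuple s' = s.d :: (lb s).map (fun x => x + 1) := by
    rw [tuple_eq_insert s', ht', hlb, hd']
    rfl
  set l := lb s with hl
  have hc1 : invc (tuple s) = invc l + l.countP (fun x => x < s.d) := by
    rw [hu, invc_append_singleton]
  have hc2 : invc (tuple s') = l.countP (fun x => s.d ≤ x) + invc l := by
    rw [hv]
    show (l.map (fun x => x + 1)).countP (fun x => s.d < x) + invc (l.map (fun x => x + 1)) = _
    rw [invc_map_succ, List.countP_map]
    congr 1
    apply List.countP_congr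
    intro x _
    simp only [Function.comp_apply, decide_eq_true_eq]
    omega
  have hp1 : psum (tuple s) = (l.map (fun x => max s.d x)).sum + psum l := by
    rw [hu, psum_perm (List.perm_append_singleton _ _)]
    rfl
  have hp2 : psum (tuple s') = ((l.map (fun x => max s.d x)).sum
      + l.countP (fun x => s.d ≤ x)) + psum (l.map (fun x => x + 1)) := by
    rw [hv]
    show ((l.map (fun x => x + 1)).map (fun x => max s.d x)).sum
        + psum (l.map (fun x => x + 1)) = _
    rw [maxsum_succ]
  have hpm := psum_map_succ l
  have hcc := countP_lt_add_ge s.d l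
  rw [lb_length] at hcc
  have hlen : (l.length : ℤ) = M := by rw [hl, lb_length]
  rw [hlen] at hpm
  rw [Kc_eq, Kc_eq, hc1, hc2, hp1, hp2, hT, hTM]
  push_cast
  push_cast at hpm hcc
  ring_nf
  ring_nf at hpm
  linarith

end StepLemmas

section MainLemmas

variable {M : ℕ}

lemma step_Kc {s s' : St M} {α : Act} (hα : α ≠ Act.Nl) (h : Step s α s') :
    Kc s' = Kc s + (if α = Act.I then 1 else 0) := by
  cases α with
  | D =>
      obtain ⟨ht, hT⟩ := step_D_tuple h
      simp [Kc, ht, hT]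
  | I => simpa using step_I_Kc h
  | Ne =>
      obtain ⟨ht, hT⟩ := step_Ne_tuple h
      simp [Kc, ht, hT]
  | Nl => exact absurd rfl hα
  | dm => simpa using step_dm_Kc h
  | bp => simpa using step_bp_Kc h

lemma chain_Kc : ∀ {s : St M} {L : List Act} {s' : St M}, Chain s L s' →
    Act.Nl ∉ L → Kc s' = Kc s + L.count Act.I := by
  intro s L s' h
  induction h with
  | nil => simp
  | @cons s u s' α L hstep hch ih =>
      intro hmem
      rw [List.mem_cons] at hmem
      push_neg at hmem
      have hα : α ≠ Act.Nl := fun hh => hmem.1 hh.symm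
      have h1 := step_Kc hα hstep
      have h2 := ih hmem.2
      rw [h2, h1, List.count_cons]
      by_cases hI : α = Act.I
      · rw [if_pos hI, if_pos (by simp [hI])]
        push_cast
        ring
      · rw [if_neg hI, if_neg (by simp [hI])]
        push_cast
        ring

lemma invc_replicate_zero : ∀ n : ℕ, invc (List.replicate n (0 : ℤ)) = 0 := by
  intro n
  induction n with
  | zero => rfl
  | succ n ih =>
      rw [List.replicate_succ]
      show (List.replicate n (0 : ℤ)).countP (fun x => (0 : ℤ) < x)
          + invc (List.replicate n 0) = 0
      rw [ih, List.countP_eq_zero.2]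
      intro x hx
      rw [List.eq_of_mem_replicate hx]
      simp

lemma psum_replicate_zero : ∀ n : ℕ, psum (List.replicate n (0 : ℤ)) = 0 := by
  intro n
  induction n with
  | zero => rfl
  | succ n ih =>
      rw [List.replicate_succ]
      show ((List.replicate n (0 : ℤ)).map (fun x => max 0 x)).sum
          + psum (List.replicate n 0) = 0
      rw [ih, List.map_replicate]
      simp

lemma tuple_init (M : ℕ) : tuple (init M) = List.replicate (M + 1) (0 : ℤ) := by
  have h1 : lb (init M) = List.replicate M (0 : ℤ) := by
    simp [lb, init]
  rw [tuple_eq_insert, show (init M).t - 1 = M from rfl]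
  show (lb (init M)).insertIdx M (0 : ℤ) = _
  rw [h1, insertIdx_take_drop 0 M _ (by simp)]
  simp [List.replicate_succ']

lemma Kc_init (M : ℕ) : Kc (init M) = 0 := by
  rw [Kc_eq, tuple_init, invc_replicate_zero, psum_replicate_zero,
    show (init M).T = 0 from rfl]
  simp

end MainLemmas


end BDM

open BDM in
/-- Along any finite path of feasible BDM transitions from the
initial state `s₀` to `s ∈ S` containing no action of type `N_<`, the number of
inhibition actions `I` equals the class of `s`: `#I = K(s)`. -/
theorem bdm_count_I_eq_class (M q : ℕ) (hM : 1 ≤ M) (hq : 2 ≤ q)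
    (s : St M) (hs : inS s) (L : List Act)
    (hL : Chain (init M) L s) (hNl : Act.Nl ∉ L) :
    (L.count Act.I : ℤ) = Kc s := by
  have h := chain_Kc hL hNl
  rw [h, Kc_init]
  ring
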